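/- There exists N₀ ∈ ℕ such that for all integers N ≥ N₀, |∑_{1 ≤ n < N} λ(n)λ(N−n)| < N − 1. -/
import Mathlib

open Finset

def lam (n : ℕ) : ℤ := (-1) ^ (ArithmeticFunction.cardFactors n)

noncomputable def Slam (p : ℕ) (ξ : ℕ) : ℂ :=
  ∑ n ∈ Finset.Ico 1 p, (lam n : ℂ) * Complex.exp (2 * Real.pi * Complex.I * (n * ξ) / p)

/-! ### Basic facts about `lam` -/

lemma lam_one : lam 1 = 1 := by
  simp [lam]

lemma lam_pm (n : ℕ) : lam n = 1 ∨ lam n = -1 := by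
  rcases Nat.even_or_odd (ArithmeticFunction.cardFactors n) with h | h
  · left; simp [lam, h.neg_one_pow]
  · right; simp [lam, h.neg_one_pow]

lemma lam_mul_self (n : ℕ) : lam n * lam n = 1 := by
  rcases lam_pm n with h | h <;> rw [h] <;> norm_num

lemma lam_ne_zero (n : ℕ) : lam n ≠ 0 := by
  rcases lam_pm n with h | h <;> rw [h] <;> norm_num

lemma lam_mul {a b : ℕ} (ha : a ≠ 0) (hb : b ≠ 0) : lam (a * b) = lam a * lam b := by
  rw [lam, lam, lam, ArithmeticFunction.cardFactors_mul ha hb, pow_add]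

lemma lam_prime {p : ℕ} (hp : p.Prime) : lam p = -1 := by
  rw [lam, ArithmeticFunction.cardFactors_apply_prime hp, pow_one]

lemma lam_two_mul {x : ℕ} (hx : x ≠ 0) : lam (2 * x) = -lam x := by
  rw [lam_mul (by norm_num) hx, lam_prime Nat.prime_two]; ring

/-! ### badness -/

def bad (N : ℕ) : Prop := ∀ n ∈ Finset.Ico 1 N, lam n * lam (N - n) = lam (N - 1)


/-! ### small values of lam -/

lemma lam_2 : lam 2 = -1 := lam_prime Nat.prime_two
lemma lam_3 : lam 3 = -1 := lam_prime Nat.prime_three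
lemma lam_4 : lam 4 = 1 := by
  rw [show (4:ℕ) = 2*2 by norm_num, lam_mul (by norm_num) (by norm_num), lam_2]; norm_num
lemma lam_5 : lam 5 = -1 := lam_prime (by norm_num)
lemma lam_6 : lam 6 = 1 := by
  rw [show (6:ℕ) = 2*3 by norm_num, lam_mul (by norm_num) (by norm_num), lam_2, lam_3]; norm_num
lemma lam_7 : lam 7 = -1 := lam_prime (by norm_num)
lemma lam_8 : lam 8 = -1 := by
  rw [show (8:ℕ) = 2*4 by norm_num, lam_mul (by norm_num) (by norm_num), lam_2, lam_4]; norm_num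
lemma lam_9 : lam 9 = 1 := by
  rw [show (9:ℕ) = 3*3 by norm_num, lam_mul (by norm_num) (by norm_num), lam_3]; norm_num
lemma lam_11 : lam 11 = -1 := lam_prime (by norm_num)
lemma lam_14 : lam 14 = 1 := by
  rw [show (14:ℕ) = 2*7 by norm_num, lam_mul (by norm_num) (by norm_num), lam_2, lam_7]; norm_num
lemma lam_18 : lam 18 = -1 := by
  rw [show (18:ℕ) = 2*9 by norm_num, lam_mul (by norm_num) (by norm_num), lam_2, lam_9]; norm_num
lemma lam_19 : lam 19 = -1 := lam_prime (by norm_num)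
lemma lam_22 : lam 22 = 1 := by
  rw [show (22:ℕ) = 2*11 by norm_num, lam_mul (by norm_num) (by norm_num), lam_2, lam_11]; norm_num
lemma lam_12 : lam 12 = -1 := by
  rw [show (12:ℕ) = 2*6 by norm_num, lam_mul (by norm_num) (by norm_num), lam_2, lam_6]; norm_num
lemma lam_24 : lam 24 = 1 := by
  rw [show (24:ℕ) = 2*12 by norm_num, lam_mul (by norm_num) (by norm_num), lam_2, lam_12]; norm_num

/-! ### direct refutations of badness for small values -/

lemma notbad4 : ¬ bad 4 := by
  intro h
  have h2 := h 2 (by decide)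
  norm_num [lam_2, lam_3] at h2

lemma notbad6 : ¬ bad 6 := by
  intro h
  have h3 := h 3 (by decide)
  norm_num [lam_3, lam_5] at h3

lemma notbad7 : ¬ bad 7 := by
  intro h
  have h3 := h 3 (by decide)
  norm_num [lam_3, lam_4, lam_6] at h3

lemma notbad8 : ¬ bad 8 := by
  intro h
  have h4 := h 4 (by decide)
  norm_num [lam_4, lam_7] at h4

lemma notbad9 : ¬ bad 9 := by
  intro h
  have h2 := h 2 (by decide)
  norm_num [lam_2, lam_7, lam_8] at h2

lemma notbad15 : ¬ bad 15 := by
  intro h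
  have h4 := h 4 (by decide)
  norm_num [lam_4, lam_11, lam_14] at h4

lemma notbad20 : ¬ bad 20 := by
  intro h
  have h2 := h 2 (by decide)
  norm_num [lam_2, lam_18, lam_19] at h2

lemma notbad25 : ¬ bad 25 := by
  intro h
  have h3 := h 3 (by decide)
  norm_num [lam_3, lam_22, lam_24] at h3

/-! ### descent -/

lemma bad_descent {N p M : ℕ} (hp : p.Prime) (hNM : N = p * M) (hM : 2 ≤ M)
    (h : bad N) : bad M := by
  have hkey : ∀ j, 1 ≤ j → j < M → lam j * lam (M - j) = lam (N - 1) := by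
    intro j hj1 hjM
    have hp2 := hp.two_le
    have hmem : p * j ∈ Finset.Ico 1 N := by
      simp only [Finset.mem_Ico]
      constructor
      · exact Nat.one_le_iff_ne_zero.2 (Nat.mul_ne_zero (by omega) (by omega))
      · rw [hNM]
        exact mul_lt_mul_of_pos_left hjM (by omega : 0 < p)
    have hh := h (p * j) hmem
    have hsub : N - p * j = p * (M - j) := by
      rw [hNM, Nat.mul_sub]
    rw [hsub, lam_mul (by omega) (by omega), lam_mul (by omega) (by omega)] at hh
    calc lam j * lam (M - j)
        = (lam p * lam p) * (lam j * lam (M - j)) := by rw [lam_mul_self]; ring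
      _ = lam p * lam j * (lam p * lam (M - j)) := by ring
      _ = lam (N - 1) := hh
  intro j hj
  simp only [Finset.mem_Ico] at hj
  have h1 := hkey 1 le_rfl (by omega)
  have hj' := hkey j hj.1 hj.2
  rw [lam_one, one_mul] at h1
  rw [hj', ← h1]


/-! ### Dirichlet pigeonhole in `ZMod P` -/

lemma div_eq_sub_lt {P : ℕ} (hP0 : 0 < P) {A B : ℕ} (h : A / P = B / P) : A - B < P := by
  have e1 : A < A / P * P + P := by
    have h := Nat.div_add_mod A P
    have h2 := Nat.mod_lt A hP0
    calc A = P * (A / P) + A % P := h.symm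
      _ < P * (A / P) + P := by omega
      _ = A / P * P + P := by rw [Nat.mul_comm]
  have e2 : A / P * P ≤ B := by rw [h]; exact Nat.div_mul_le_self B P
  omega

lemma dirichlet_pigeon {P : ℕ} [hPF : Fact P.Prime] {Q : ℕ} (hQ2 : 2 ≤ Q) (hQP : Q < P)
    (z : ZMod P) (hz : z ≠ 0) :
    ∃ v : ℕ, 1 ≤ v ∧ v < Q ∧
      (Q * (((v : ℕ) : ZMod P) * z).val < P ∨ Q * (P - (((v : ℕ) : ZMod P) * z).val) < P) := by
  have hPp : P.Prime := Fact.out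
  have hP0 : 0 < P := hPp.pos
  set g : ℕ → ℕ := fun v => (((v : ℕ) : ZMod P) * z).val with hg
  have hgval : ∀ v, g v < P := fun v => ZMod.val_lt _
  have hginj : ∀ v₁, v₁ < Q → ∀ v₂, v₂ < Q → g v₁ = g v₂ → v₁ = v₂ := by
    intro v₁ h₁ v₂ h₂ he
    have hee : ((v₁ : ℕ) : ZMod P) * z = ((v₂ : ℕ) : ZMod P) * z := ZMod.val_injective P he
    have hvv := mul_right_cancel₀ hz hee
    have e1 : ((v₁ : ℕ) : ZMod P).val = v₁ := ZMod.val_cast_of_lt (by omega)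
    have e2 : ((v₂ : ℕ) : ZMod P).val = v₂ := ZMod.val_cast_of_lt (by omega)
    rw [← e1, ← e2, hvv]
  by_cases hcol : ∃ v₁, v₁ < Q ∧ ∃ v₂, v₂ < Q ∧ v₂ < v₁ ∧ g v₁ * Q / P = g v₂ * Q / P
  · obtain ⟨v₁, h₁, v₂, h₂, hlt, hB⟩ := hcol
    have hgne12 : g v₁ ≠ g v₂ := fun he => by have := hginj v₁ h₁ v₂ h₂ he; omega
    have hdiff1 : (g v₁ - g v₂) * Q < P := by
      rw [Nat.sub_mul]; exact div_eq_sub_lt hP0 hB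
    have hdiff2 : (g v₂ - g v₁) * Q < P := by
      rw [Nat.sub_mul]; exact div_eq_sub_lt hP0 hB.symm
    refine ⟨v₁ - v₂, by omega, by omega, ?_⟩
    have hcast : ((v₁ - v₂ : ℕ) : ZMod P) * z
        = ((v₁ : ℕ) : ZMod P) * z - ((v₂ : ℕ) : ZMod P) * z := by
      have hc : ((v₁ - v₂ : ℕ) : ZMod P) = ((v₁ : ℕ) : ZMod P) - ((v₂ : ℕ) : ZMod P) := by
        push_cast [Nat.cast_sub (le_of_lt hlt)]
        ring
      rw [hc]; ring
    have hab1 : ((v₁ : ℕ) : ZMod P) * z = ((g v₁ : ℕ) : ZMod P) := (ZMod.natCast_zmod_val _).symm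
    have hab2 : ((v₂ : ℕ) : ZMod P) * z = ((g v₂ : ℕ) : ZMod P) := (ZMod.natCast_zmod_val _).symm
    rcases Nat.lt_or_ge (g v₂) (g v₁) with hgt | hge
    · left
      have hvv : g (v₁ - v₂) = g v₁ - g v₂ := by
        show (((v₁ - v₂ : ℕ) : ZMod P) * z).val = _
        rw [hcast, hab1, hab2]
        have hc2 : ((g v₁ : ℕ) : ZMod P) - ((g v₂ : ℕ) : ZMod P)
            = ((g v₁ - g v₂ : ℕ) : ZMod P) := by
          push_cast [Nat.cast_sub (le_of_lt hgt)]; ring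
        rw [hc2, ZMod.val_cast_of_lt (by have := hgval v₁; omega)]
      show Q * g (v₁ - v₂) < P
      rw [hvv, Nat.mul_comm]
      exact hdiff1
    · right
      have hgt2 : g v₁ < g v₂ := by omega
      have hvv : g (v₁ - v₂) = P - (g v₂ - g v₁) := by
        show (((v₁ - v₂ : ℕ) : ZMod P) * z).val = _
        rw [hcast, hab1, hab2]
        have e : ((g v₁ : ℕ) : ZMod P) - ((g v₂ : ℕ) : ZMod P)
            = -(((g v₂ - g v₁ : ℕ)) : ZMod P) := by
          push_cast [Nat.cast_sub (le_of_lt hgt2)]; ring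
        rw [e, ZMod.neg_val]
        have hne0 : ((g v₂ - g v₁ : ℕ) : ZMod P) ≠ 0 := by
          rw [Ne, ZMod.natCast_eq_zero_iff]
          intro hdvd
          have := Nat.le_of_dvd (by omega) hdvd
          have := hgval v₂
          omega
        rw [if_neg hne0, ZMod.val_cast_of_lt (by have := hgval v₂; omega)]
      show Q * (P - g (v₁ - v₂)) < P
      rw [hvv]
      have he2 : P - (P - (g v₂ - g v₁)) = g v₂ - g v₁ := by
        have := hgval v₂; omega
      rw [he2, Nat.mul_comm]
      exact hdiff2
  · push_neg at hcol
    have hInj : Set.InjOn (fun v => g v * Q / P) (Finset.range Q) := by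
      intro a ha b hb he
      simp only [Finset.coe_range, Set.mem_Iio] at ha hb
      rcases lt_trichotomy a b with h | h | h
      · exact absurd he.symm (hcol b hb a ha h)
      · exact h
      · exact absurd he (hcol a ha b hb h)
    have hmaps : ∀ v ∈ Finset.range Q, g v * Q / P ∈ Finset.range Q := by
      intro v _
      simp only [Finset.mem_range]
      rw [Nat.div_lt_iff_lt_mul hP0]
      calc g v * Q < P * Q := by
            exact mul_lt_mul_of_pos_right (hgval v) (by omega)
        _ = Q * P := Nat.mul_comm _ _
    have himage : (Finset.range Q).image (fun v => g v * Q / P) = Finset.range Q := by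
      apply Finset.eq_of_subset_of_card_le
      · intro x hx
        obtain ⟨v, hv, rfl⟩ := Finset.mem_image.mp hx
        exact hmaps v hv
      · rw [Finset.card_image_of_injOn hInj]
    have hQm1 : Q - 1 ∈ (Finset.range Q).image (fun v => g v * Q / P) := by
      rw [himage]
      simp only [Finset.mem_range]
      omega
    obtain ⟨v, hv, hbv⟩ := Finset.mem_image.mp hQm1
    simp only [Finset.mem_range] at hv
    have hv0 : v ≠ 0 := by
      intro h
      subst h
      have hzero : g 0 = 0 := by
        show (((0 : ℕ) : ZMod P) * z).val = 0
        simp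
      rw [hzero] at hbv
      simp at hbv
      omega
    have hgv0 : g v ≠ 0 := by
      intro h0
      have hmm : ((v : ℕ) : ZMod P) * z = 0 := by
        have := (ZMod.val_eq_zero (((v : ℕ) : ZMod P) * z)).mp h0
        exact this
      rcases mul_eq_zero.mp hmm with h | h
      · have he : ((v : ℕ) : ZMod P).val = v := ZMod.val_cast_of_lt (by omega)
        rw [h] at he
        simp at he
        omega
      · exact hz h
    refine ⟨v, by omega, hv, Or.inr ?_⟩
    have hge : (Q - 1) * P ≤ g v * Q := by
      have := (Nat.le_div_iff_mul_le hP0).mp (le_of_eq hbv.symm)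
      exact this
    have hne : g v * Q ≠ (Q - 1) * P := by
      intro he
      have hdvd : P ∣ g v * Q := by
        rw [he]
        exact Dvd.intro_left _ rfl
      rcases (Nat.Prime.dvd_mul hPp).mp hdvd with h | h
      · have := Nat.le_of_dvd (by omega) h
        have := hgval v
        omega
      · have := Nat.le_of_dvd (by omega) h
        omega
    have hgv : g v < P := hgval v
    have hsum : Q * (P - g v) + Q * g v = Q * P := by
      rw [← Nat.mul_add, Nat.sub_add_cancel (le_of_lt hgv)]
    have hQP' : (Q - 1) * P + P = Q * P := by
      have hq : Q - 1 + 1 = Q := by omega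
      calc (Q - 1) * P + P = ((Q - 1) + 1) * P := by rw [Nat.add_mul, Nat.one_mul]
        _ = Q * P := by rw [hq]
    have hYW : (Q - 1) * P + 1 ≤ g v * Q := by
      rcases Nat.lt_or_ge ((Q - 1) * P) (g v * Q) with h | h
      · omega
      · exfalso; exact hne (by omega)
    have hcomm : g v * Q = Q * g v := Nat.mul_comm _ _
    rw [hcomm] at hYW
    linarith [hsum, hQP', hYW]


theorem prime_case (P : ℕ) (hP : P.Prime) (hP11 : 11 ≤ P) (h : bad P) : False := by
  haveI hPF : Fact P.Prime := ⟨hP⟩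
  have hodd : P % 2 = 1 := by
    rcases hP.eq_two_or_odd with h2 | h2
    · omega
    · exact h2
  have hP2' : P ≠ 2 := by omega
  have Hrefl : ∀ k, 1 ≤ k → k < P → lam (P - k) = lam (P - 1) * lam k := by
    intro k hk1 hkP
    have hm : k ∈ Finset.Ico 1 P := by simp only [Finset.mem_Ico]; omega
    have hh := h k hm
    calc lam (P - k) = (lam k * lam k) * lam (P - k) := by rw [lam_mul_self]; ring
      _ = lam k * (lam k * lam (P - k)) := by ring
      _ = lam k * lam (P - 1) := by rw [hh]
      _ = lam (P - 1) * lam k := by ring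
  have castne : ∀ c : ℕ, 1 ≤ c → c < P → ((c : ℕ) : ZMod P) ≠ 0 := by
    intro c h1 h2 h0
    rw [ZMod.natCast_eq_zero_iff] at h0
    have := Nat.le_of_dvd (by omega) h0
    omega
  have valpos : ∀ z : ZMod P, z ≠ 0 → 1 ≤ z.val := by
    intro z hz
    by_contra hc
    push_neg at hc
    exact hz ((ZMod.val_eq_zero z).mp (by omega))
  have vallt : ∀ z : ZMod P, z.val < P := fun z => ZMod.val_lt z
  have Hneg : ∀ z : ZMod P, z ≠ 0 → lam (-z).val = lam (P - 1) * lam z.val := by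
    intro z hz
    rw [ZMod.neg_val, if_neg hz]
    exact Hrefl z.val (valpos z hz) (vallt z)
  have H2 : ∀ z : ZMod P, z ≠ 0 → lam ((2 : ZMod P) * z).val = -lam z.val := by
    intro z hz
    have hx1 := valpos z hz
    have hxP := vallt z
    have hval2 : (2 : ZMod P).val = 2 := by
      have he : ((2 : ℕ) : ZMod P) = (2 : ZMod P) := by norm_cast
      rw [← he, ZMod.val_cast_of_lt (by omega)]
    have hvm : ((2 : ZMod P) * z).val = (2 * z.val) % P := by
      rw [ZMod.val_mul, hval2]
    rw [hvm]
    rcases Nat.lt_or_ge (2 * z.val) P with hlt | hge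
    · rw [Nat.mod_eq_of_lt hlt]
      exact lam_two_mul (by omega)
    · have hne : 2 * z.val ≠ P := by omega
      have hmod : (2 * z.val) % P = 2 * z.val - P := by
        rw [Nat.mod_eq_sub_mod (by omega), Nat.mod_eq_of_lt (by omega)]
      rw [hmod]
      have hk : 2 * z.val - P = P - 2 * (P - z.val) := by omega
      rw [hk]
      rw [Hrefl (2 * (P - z.val)) (by omega) (by omega)]
      rw [lam_two_mul (show P - z.val ≠ 0 by omega)]
      rw [Hrefl z.val hx1 hxP]
      rcases lam_pm (P - 1) with he | he <;> rw [he] <;> ring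
  have MQ : ∀ Q : ℕ, Q.Prime → Q < P → ∀ z : ZMod P, z ≠ 0 →
      lam (((Q : ℕ) : ZMod P) * z).val = -lam z.val := by
    intro Q
    induction Q using Nat.strong_induction_on with
    | _ Q IH =>
      intro hQp hQP z hz
      rcases eq_or_ne Q 2 with rfl | hQ2
      · have he : ((2 : ℕ) : ZMod P) = (2 : ZMod P) := by norm_cast
        rw [he]
        exact H2 z hz
      · have hQ2le := hQp.two_le
        have hQodd : 3 ≤ Q := by omega
        have anchor : ∀ w : ZMod P, w ≠ 0 → Q * w.val < P →
            lam (((Q : ℕ) : ZMod P) * w).val = -lam w.val := by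
          intro w hw hlt
          have hQcast : ((Q : ℕ) : ZMod P).val = Q := ZMod.val_cast_of_lt (by omega)
          have hv : (((Q : ℕ) : ZMod P) * w).val = Q * w.val := by
            rw [ZMod.val_mul, hQcast, Nat.mod_eq_of_lt hlt]
          rw [hv, lam_mul (by omega) (by have := valpos w hw; omega), lam_prime hQp]
          ring
        have pull : ∀ v : ℕ, v < Q → v ≠ 0 → ∀ y : ZMod P, y ≠ 0 →
            lam (((Q : ℕ) : ZMod P) * (((v : ℕ) : ZMod P) * y)).val
              = -lam (((v : ℕ) : ZMod P) * y).val →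
            lam (((Q : ℕ) : ZMod P) * y).val = -lam y.val := by
          intro v
          induction v using Nat.strong_induction_on with
          | _ v IHv =>
            intro hvQ hv0 y hy hyp
            rcases eq_or_ne v 1 with rfl | hv1
            · have e1 : ((1 : ℕ) : ZMod P) = 1 := by norm_cast
              rw [e1, one_mul] at hyp
              exact hyp
            · by_cases hvp : v.Prime
              · have hvP : v < P := by omega
                have hMv := IH v hvQ hvp hvP
                have hQ0 : ((Q : ℕ) : ZMod P) ≠ 0 := castne Q (by omega) hQP
                have hQy : ((Q : ℕ) : ZMod P) * y ≠ 0 := mul_ne_zero hQ0 hy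
                have h2 := hMv (((Q : ℕ) : ZMod P) * y) hQy
                have hcomm : ((v : ℕ) : ZMod P) * (((Q : ℕ) : ZMod P) * y)
                    = ((Q : ℕ) : ZMod P) * (((v : ℕ) : ZMod P) * y) := by ring
                rw [hcomm] at h2
                have h3 := hMv y hy
                rw [hyp] at h2
                linarith [h2, h3]
              · have hv2 : 2 ≤ v := by omega
                have hb : v.minFac.Prime := Nat.minFac_prime (by omega)
                obtain ⟨c, hvbc⟩ := Nat.minFac_dvd v
                have hb2 := hb.two_le
                have hc0 : c ≠ 0 := by
                  intro h0; rw [h0, Nat.mul_zero] at hvbc; omega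
                have hblt : v.minFac < v := by
                  rcases Nat.lt_or_ge v.minFac v with hh | hh
                  · exact hh
                  · have hle := Nat.minFac_le (show 0 < v by omega)
                    have heq : v.minFac = v := by omega
                    exact absurd (heq ▸ hb) hvp
                have hclt : c < v := by
                  have hmm : 2 * c ≤ v.minFac * c := Nat.mul_le_mul_right c hb2
                  omega
                have hsplit : ((v : ℕ) : ZMod P)
                    = ((v.minFac : ℕ) : ZMod P) * ((c : ℕ) : ZMod P) := by
                  conv_lhs => rw [hvbc]
                  push_cast; ring
                rw [hsplit, mul_assoc] at hyp
                have hcy : ((c : ℕ) : ZMod P) * y ≠ 0 :=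
                  mul_ne_zero (castne c (by omega) (by omega)) hy
                exact IHv c hclt (lt_trans hclt hvQ) hc0 y hy
                  (IHv v.minFac hblt (lt_trans hblt hvQ) (by omega)
                    (((c : ℕ) : ZMod P) * y) hcy hyp)
        obtain ⟨v, hv1, hvQ, hcase⟩ := dirichlet_pigeon (show 2 ≤ Q by omega) hQP z hz
        have hsne : ((v : ℕ) : ZMod P) * z ≠ 0 :=
          mul_ne_zero (castne v (by omega) (by omega)) hz
        rcases hcase with hlt | hlt
        · exact pull v hvQ (by omega) z hz (anchor _ hsne hlt)
        · have hnegs : -(((v : ℕ) : ZMod P) * z) ≠ 0 := neg_ne_zero.mpr hsne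
          have hnegval : (-(((v : ℕ) : ZMod P) * z)).val = P - (((v : ℕ) : ZMod P) * z).val := by
            rw [ZMod.neg_val, if_neg hsne]
          have hanch := anchor (-(((v : ℕ) : ZMod P) * z)) hnegs (by rw [hnegval]; exact hlt)
          have htrans : lam (((Q : ℕ) : ZMod P) * (((v : ℕ) : ZMod P) * z)).val
              = -lam (((v : ℕ) : ZMod P) * z).val := by
            have e1 : ((Q : ℕ) : ZMod P) * (-(((v : ℕ) : ZMod P) * z))
                = -(((Q : ℕ) : ZMod P) * (((v : ℕ) : ZMod P) * z)) := by ring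
            rw [e1] at hanch
            have hQs : ((Q : ℕ) : ZMod P) * (((v : ℕ) : ZMod P) * z) ≠ 0 :=
              mul_ne_zero (castne Q (by omega) hQP) hsne
            rw [Hneg _ hQs, Hneg _ hsne] at hanch
            rcases lam_pm (P - 1) with he | he <;> rw [he] at hanch <;> linarith
          exact pull v hvQ (by omega) z hz htrans
  have MULT : ∀ a : ℕ, 1 ≤ a → a < P → ∀ z : ZMod P, z ≠ 0 →
      lam (((a : ℕ) : ZMod P) * z).val = lam a * lam z.val := by
    intro a
    induction a using Nat.strong_induction_on with
    | _ a IHa =>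
      intro ha1 haP z hz
      rcases eq_or_ne a 1 with rfl | ha1'
      · have e1 : ((1 : ℕ) : ZMod P) = 1 := by norm_cast
        rw [e1, one_mul, lam_one, one_mul]
      · by_cases hap : a.Prime
        · rw [MQ a hap haP z hz, lam_prime hap]; ring
        · have ha2 : 2 ≤ a := by omega
          have hb : a.minFac.Prime := Nat.minFac_prime (by omega)
          obtain ⟨c, habc⟩ := Nat.minFac_dvd a
          have hb2 := hb.two_le
          have hc0 : c ≠ 0 := by intro h0; rw [h0, Nat.mul_zero] at habc; omega
          have hblt : a.minFac < a := by
            rcases Nat.lt_or_ge a.minFac a with hh | hh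
            · exact hh
            · have hle := Nat.minFac_le (show 0 < a by omega)
              have heq : a.minFac = a := by omega
              exact absurd (heq ▸ hb) hap
          have hclt : c < a := by
            have hmm : 2 * c ≤ a.minFac * c := Nat.mul_le_mul_right c hb2
            omega
          have hsplit : ((a : ℕ) : ZMod P)
              = ((a.minFac : ℕ) : ZMod P) * ((c : ℕ) : ZMod P) := by
            conv_lhs => rw [habc]
            push_cast; ring
          have hcy : ((c : ℕ) : ZMod P) * z ≠ 0 :=
            mul_ne_zero (castne c (by omega) (by omega)) hz
          rw [hsplit, mul_assoc]
          rw [IHa a.minFac hblt (by omega) (by omega) (((c : ℕ) : ZMod P) * z) hcy]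
          rw [IHa c hclt (by omega) (by omega) z hz]
          have hla : lam a = lam a.minFac * lam c := by
            conv_lhs => rw [habc]
            exact lam_mul (by omega) (by omega)
          rw [hla]; ring
  have SQLAM : ∀ c : ℕ, 1 ≤ c → c < P → IsSquare ((c : ℕ) : ZMod P) → lam c = 1 := by
    intro c hc1 hcP hsq
    obtain ⟨r, hr⟩ := hsq
    have hr0 : r ≠ 0 := by
      intro h0
      rw [h0, mul_zero] at hr
      exact castne c hc1 hcP hr
    have hrval1 : 1 ≤ r.val := valpos r hr0
    have hrvalP : r.val < P := vallt r
    have hu : ((r.val : ℕ) : ZMod P) = r := ZMod.natCast_zmod_val r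
    have h1 : lam c = lam ((c : ℕ) : ZMod P).val := by rw [ZMod.val_cast_of_lt hcP]
    rw [h1, hr]
    have h2 : r * r = ((r.val : ℕ) : ZMod P) * r := by rw [hu]
    rw [h2, MULT r.val hrval1 hrvalP r hr0]
    exact lam_mul_self r.val
  -- endgame
  have h8 : P % 8 = 1 ∨ P % 8 = 3 ∨ P % 8 = 5 ∨ P % 8 = 7 := by omega
  have sq2 : (P % 8 = 1 ∨ P % 8 = 7) → False := by
    intro hcase
    have hsq : IsSquare (2 : ZMod P) := (ZMod.exists_sq_eq_two_iff hP2').mpr hcase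
    have hsq' : IsSquare ((2 : ℕ) : ZMod P) := by
      have he : ((2 : ℕ) : ZMod P) = (2 : ZMod P) := by norm_cast
      rw [he]; exact hsq
    have hh := SQLAM 2 (by norm_num) (by omega) hsq'
    rw [lam_2] at hh; norm_num at hh
  rcases h8 with h8 | h8 | h8 | h8
  · exact sq2 (Or.inl h8)
  · -- P % 8 = 3
    have h4m : (P + 1) % 4 = 0 := by omega
    have hm4 : P + 1 = 4 * ((P + 1) / 4) := by omega
    have hm2 : 2 ≤ (P + 1) / 4 := by omega
    have hmodd : ((P + 1) / 4) % 2 = 1 := by omega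
    have hq0p : ((P + 1) / 4).minFac.Prime := Nat.minFac_prime (by omega)
    have hq0d : ((P + 1) / 4).minFac ∣ (P + 1) / 4 := Nat.minFac_dvd _
    set q0 := ((P + 1) / 4).minFac with hq0def
    have hq0d' : q0 ∣ P + 1 := hq0d.trans ⟨4, by omega⟩
    have hq0odd : q0 ≠ 2 := by
      intro h2
      have hdd : (2 : ℕ) ∣ (P + 1) / 4 := h2 ▸ hq0d
      omega
    have hq0le : q0 ≤ (P + 1) / 4 := Nat.minFac_le (by omega)
    have hq0P : q0 < P := by omega
    have hq02 := hq0p.two_le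
    haveI : Fact q0.Prime := ⟨hq0p⟩
    have hq0oddm : q0 % 2 = 1 := by
      rcases hq0p.eq_two_or_odd with hh | hh
      · omega
      · exact hh
    have hdvdZ : (q0 : ℤ) ∣ (P : ℤ) + 1 := by
      have hcast := Int.natCast_dvd_natCast.mpr hq0d'
      have he : ((P + 1 : ℕ) : ℤ) = (P : ℤ) + 1 := by push_cast; ring
      rwa [he] at hcast
    have hmodeq : (P : ℤ) % (q0 : ℤ) = (-1 : ℤ) % (q0 : ℤ) := by
      have hcong : (P : ℤ) ≡ -1 [ZMOD (q0 : ℤ)] :=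
        Int.ModEq.symm (Int.modEq_iff_dvd.mpr (by
          rw [show (P : ℤ) - (-1 : ℤ) = (P : ℤ) + 1 by ring]
          exact hdvdZ))
      exact hcong
    have lA : legendreSym q0 (P : ℤ) = legendreSym q0 (-1 : ℤ) := by
      rw [legendreSym.mod q0 (P : ℤ), legendreSym.mod q0 (-1 : ℤ), hmodeq]
    have lB := legendreSym.at_neg_one (p := q0) hq0odd
    have hrec := legendreSym.quadratic_reciprocity (p := P) (q := q0) hP2' hq0odd
      (show P ≠ q0 by omega)
    have hPdiv : (P / 2) % 2 = 1 := by omega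
    have hq04 : q0 % 4 = 1 ∨ q0 % 4 = 3 := by omega
    have hlegP : legendreSym P (q0 : ℤ) = 1 := by
      rw [lA, lB] at hrec
      rcases hq04 with hc | hc
      · have hchi : ZMod.χ₄ (q0 : ZMod 4) = 1 := ZMod.χ₄_nat_one_mod_four hc
        have hexp : ((-1 : ℤ)) ^ (P / 2 * (q0 / 2)) = 1 := by
          have hev : (q0 / 2) % 2 = 0 := by omega
          have hE : Even (P / 2 * (q0 / 2)) := (Nat.even_iff.mpr hev).mul_left _
          exact hE.neg_one_pow
        rw [hchi, hexp] at hrec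
        linarith
      · have hchi : ZMod.χ₄ (q0 : ZMod 4) = -1 := ZMod.χ₄_nat_three_mod_four hc
        have hexp : ((-1 : ℤ)) ^ (P / 2 * (q0 / 2)) = -1 := by
          have ho1 : Odd (P / 2) := Nat.odd_iff.mpr hPdiv
          have ho2 : Odd (q0 / 2) := Nat.odd_iff.mpr (by omega)
          exact (ho1.mul ho2).neg_one_pow
        rw [hchi, hexp] at hrec
        linarith
    have hq0cast : ((q0 : ℤ) : ZMod P) ≠ 0 := by
      have he : ((q0 : ℤ) : ZMod P) = ((q0 : ℕ) : ZMod P) := by norm_cast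
      rw [he]; exact castne q0 (by omega) hq0P
    have hsqq := (legendreSym.eq_one_iff P hq0cast).mp hlegP
    have hsqq' : IsSquare ((q0 : ℕ) : ZMod P) := by
      have he : ((q0 : ℤ) : ZMod P) = ((q0 : ℕ) : ZMod P) := by norm_cast
      rwa [he] at hsqq
    have hh := SQLAM q0 (by omega) hq0P hsqq'
    rw [lam_prime hq0p] at hh
    norm_num at hh
  · -- P % 8 = 5
    have hq0p : (P - 4).minFac.Prime := Nat.minFac_prime (by omega)
    have hq0d : (P - 4).minFac ∣ P - 4 := Nat.minFac_dvd _
    set q0 := (P - 4).minFac with hq0def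
    have hq0odd : q0 ≠ 2 := by
      intro h2
      have hdd : (2 : ℕ) ∣ P - 4 := h2 ▸ hq0d
      omega
    have hq0le : q0 ≤ P - 4 := Nat.minFac_le (by omega)
    have hq0P : q0 < P := by omega
    have hq02 := hq0p.two_le
    haveI : Fact q0.Prime := ⟨hq0p⟩
    have hdvdZ : (q0 : ℤ) ∣ (P : ℤ) - 4 := by
      have hcast := Int.natCast_dvd_natCast.mpr hq0d
      have he : ((P - 4 : ℕ) : ℤ) = (P : ℤ) - 4 := by omega
      rwa [he] at hcast
    have hmodeq : (P : ℤ) % (q0 : ℤ) = (4 : ℤ) % (q0 : ℤ) := by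
      have hcong : (P : ℤ) ≡ 4 [ZMOD (q0 : ℤ)] :=
        Int.ModEq.symm (Int.modEq_iff_dvd.mpr (by
          rw [show (P : ℤ) - (4 : ℤ) = (P : ℤ) - 4 by ring]
          exact hdvdZ))
      exact hcong
    have lA : legendreSym q0 (P : ℤ) = legendreSym q0 (4 : ℤ) := by
      rw [legendreSym.mod q0 (P : ℤ), legendreSym.mod q0 (4 : ℤ), hmodeq]
    have h20 : ((2 : ℤ) : ZMod q0) ≠ 0 := by
      have he : ((2 : ℤ) : ZMod q0) = ((2 : ℕ) : ZMod q0) := by norm_cast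
      rw [he, Ne, ZMod.natCast_eq_zero_iff]
      intro hdd
      have := Nat.le_of_dvd (by norm_num) hdd
      omega
    have lB : legendreSym q0 (4 : ℤ) = 1 := by
      have h4 : (4 : ℤ) = 2 * 2 := by norm_num
      rw [h4, legendreSym.mul]
      rcases legendreSym.eq_one_or_neg_one (p := q0) (a := 2) h20 with hh | hh <;>
        rw [hh] <;> norm_num
    have hrec := legendreSym.quadratic_reciprocity (p := P) (q := q0) hP2' hq0odd
      (show P ≠ q0 by omega)
    have hexp : ((-1 : ℤ)) ^ (P / 2 * (q0 / 2)) = 1 := by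
      have hev : (P / 2) % 2 = 0 := by omega
      have hE : Even (P / 2 * (q0 / 2)) := (Nat.even_iff.mpr hev).mul_right _
      exact hE.neg_one_pow
    rw [lA, lB, hexp, one_mul] at hrec
    have hq0cast : ((q0 : ℤ) : ZMod P) ≠ 0 := by
      have he : ((q0 : ℤ) : ZMod P) = ((q0 : ℕ) : ZMod P) := by norm_cast
      rw [he]; exact castne q0 (by omega) hq0P
    have hsqq := (legendreSym.eq_one_iff P hq0cast).mp hrec
    have hsqq' : IsSquare ((q0 : ℕ) : ZMod P) := by
      have he : ((q0 : ℤ) : ZMod P) = ((q0 : ℕ) : ZMod P) := by norm_cast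
      rwa [he] at hsqq
    have hh := SQLAM q0 (by omega) hq0P hsqq'
    rw [lam_prime hq0p] at hh
    norm_num at hh
  · exact sq2 (Or.inr h8)


theorem main_not_bad : ∀ N, 11 ≤ N → ¬ bad N := by
  intro N
  induction N using Nat.strong_induction_on with
  | _ N IH =>
    intro hN11 hbad
    by_cases hNp : N.Prime
    · exact prime_case N hNp hN11 hbad
    · have hp : N.minFac.Prime := Nat.minFac_prime (by omega)
      have hp2 := hp.two_le
      have hdvd : N.minFac ∣ N := Nat.minFac_dvd N
      obtain ⟨M, hNM⟩ := hdvd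
      have hdivM : N / N.minFac = M := Nat.div_eq_of_eq_mul_left hp.pos (hNM.trans (Nat.mul_comm _ _))
      have hple : N.minFac ≤ M := by
        have h2 := Nat.minFac_le_div (by omega) hNp
        rwa [hdivM] at h2
      have hM2 : 2 ≤ M := le_trans hp2 hple
      have hMN : M < N := by
        rw [hNM]
        calc M = 1 * M := (one_mul M).symm
          _ < N.minFac * M := mul_lt_mul_of_pos_right (by omega) (by omega)
      have hbadM : bad M := bad_descent hp hNM hM2 hbad
      by_cases hM11 : 11 ≤ M
      · exact IH M hMN hM11 hbadM
      · have hM10 : M ≤ 10 := by omega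
        interval_cases M
        · omega
        · omega
        · exact notbad4 hbadM
        · -- M = 5
          have hple5 : N.minFac ≤ 5 := hple
          interval_cases h5 : N.minFac
          · omega
          · exact notbad15 (by rw [show (15:ℕ) = N from by omega] ; exact hbad)
          · exact absurd hp (by norm_num)
          · exact notbad25 (by rw [show (25:ℕ) = N from by omega] ; exact hbad)
        · exact notbad6 hbadM
        · exact notbad7 hbadM
        · exact notbad8 hbadM
        · exact notbad9 hbadM
        · -- M = 10
          have h2N : 2 ∣ N := ⟨N.minFac * 5, by omega⟩
          have hmf2 : N.minFac ≤ 2 := Nat.minFac_le_of_dvd (le_refl 2) h2N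
          exact notbad20 (by rw [show (20:ℕ) = N from by omega] ; exact hbad)

/-! ### from a witness to the strict bound -/

lemma abs_sum_le_of_ne {s : Finset ℕ} {f : ℕ → ℤ}
    (hf : ∀ i ∈ s, f i = 1 ∨ f i = -1) {a b : ℕ} (ha : a ∈ s) (hb : b ∈ s)
    (hab : f a ≠ f b) : |∑ i ∈ s, f i| ≤ (s.card : ℤ) - 2 := by
  have hne : a ≠ b := fun h => hab (by rw [h])
  have hb' : b ∈ s.erase a := Finset.mem_erase.2 ⟨fun h => hne h.symm, hb⟩
  have h1 : ∑ i ∈ s, f i = f a + ∑ i ∈ s.erase a, f i := (Finset.add_sum_erase s f ha).symm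
  have h2 : ∑ i ∈ s.erase a, f i = f b + ∑ i ∈ (s.erase a).erase b, f i :=
    (Finset.add_sum_erase _ f hb').symm
  have hfab : f a + f b = 0 := by
    rcases hf a ha with h | h <;> rcases hf b hb with h' | h' <;>
      first
        | (exact absurd (h.trans h'.symm) hab)
        | (rw [h, h']; norm_num)
  have hsum : ∑ i ∈ s, f i = ∑ i ∈ (s.erase a).erase b, f i := by
    rw [h1, h2, ← add_assoc, hfab, zero_add]
  rw [hsum]
  have hcard : ((s.erase a).erase b).card = s.card - 2 := by
    rw [Finset.card_erase_of_mem hb', Finset.card_erase_of_mem ha]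
    omega
  have hb2 : 2 ≤ s.card := by
    have := Finset.card_le_card (Finset.insert_subset ha (Finset.singleton_subset_iff.2 hb))
    simpa [Finset.card_insert_of_notMem, hne] using this
  calc |∑ i ∈ (s.erase a).erase b, f i| ≤ ∑ i ∈ (s.erase a).erase b, |f i| :=
        Finset.abs_sum_le_sum_abs _ _
    _ ≤ ∑ _i ∈ (s.erase a).erase b, (1 : ℤ) := by
        apply Finset.sum_le_sum
        intro i hi
        have hi' : i ∈ s := Finset.mem_of_mem_erase (Finset.mem_of_mem_erase hi)
        rcases hf i hi' with h | h <;> rw [h] <;> norm_num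
    _ = (((s.erase a).erase b).card : ℤ) := by simp
    _ ≤ (s.card : ℤ) - 2 := by
        rw [hcard]
        have : (2 : ℕ) ≤ s.card := hb2
        push_cast [Nat.cast_sub this]
        linarith

theorem stmt_19 : ∃ N₀ : ℕ, ∀ N : ℕ, N₀ ≤ N →
    |∑ n ∈ Finset.Ico 1 N, lam n * lam (N - n)| < (N : ℤ) - 1 := by
  refine ⟨11, fun N hN => ?_⟩
  have hnb := main_not_bad N hN
  rw [bad] at hnb
  push_neg at hnb
  obtain ⟨a, ha, hane⟩ := hnb
  have h1 : (1 : ℕ) ∈ Finset.Ico 1 N := by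
    simp only [Finset.mem_Ico]; omega
  have hf1 : lam 1 * lam (N - 1) = lam (N - 1) := by rw [lam_one, one_mul]
  have hab : lam a * lam (N - a) ≠ lam 1 * lam (N - 1) := by rw [hf1]; exact hane
  have hbound := abs_sum_le_of_ne (s := Finset.Ico 1 N)
    (f := fun n => lam n * lam (N - n)) (fun i _ => by
      rcases lam_pm i with h | h <;> rcases lam_pm (N - i) with h' | h' <;>
        rw [h, h'] <;> norm_num) ha h1 hab
  have hcard : (Finset.Ico 1 N).card = N - 1 := by
    rw [Nat.card_Ico]
  rw [hcard] at hbound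
  have hN1 : (1 : ℕ) ≤ N := by omega
  have : ((N - 1 : ℕ) : ℤ) = (N : ℤ) - 1 := by
    push_cast [Nat.cast_sub hN1]; ring
  rw [this] at hbound
  linarith
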